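/- Let r ∈ ℝ, σ > 0, τ > 0, S > 0, λ₁ > 0, h > 0, and set ν := r − σ²/2. For k ∈ ℝ define d(k, S') := (k − ln S' − ν·τ)/(σ·√τ) and ℓ(k) := h − (h + e^{rτ})/Φ(d(k, S)). Then lim_{k → −∞} e^{−rτ}·( ℓ(k)·Φ(d(k, S·e^{λ₁τ})) + h·(1 − Φ(d(k, S·e^{λ₁τ}))) ) = e^{−rτ}·h. -/

import Mathlib

/-!
Moving the spot from `S` to `S·e^{λ₁τ}` lowers the standardized strike `d` by the fixed amount
`c = λ₁τ/(σ√τ) > 0`, and once the budget constraint is substituted the price is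
`e^{-rτ} h - e^{-rτ} (h + e^{rτ}) · Φ(d - c)/Φ(d)`. The ratio compares the masses of
`N(c,1)` and `N(0,1)` below `d`; their densities differ by the factor
`exp (c t - c²/2) ≤ exp (c d - c²/2)` on `(-∞, d]`, so the ratio tends to `0` as `d → -∞`.
-/

open MeasureTheory ProbabilityTheory Real Filter Set
open scoped NNReal Topology

/-- Cumulative distribution function of the standard normal distribution. -/
noncomputable def stdNormalCDF : ℝ → ℝ :=
  fun x => ProbabilityTheory.cdf (ProbabilityTheory.gaussianReal 0 1) x

lemma cdf_gaussianReal_pos (μ : ℝ) {v : ℝ≥0} (hv : v ≠ 0) (x : ℝ) :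
    0 < cdf (gaussianReal μ v) x := by
  rw [cdf_eq_real, measureReal_def]
  refine ENNReal.toReal_pos (fun hzero => ?_) (measure_ne_top _ _)
  have hvol := gaussianReal_absolutelyContinuous' μ hv hzero
  simp [Real.volume_Iic] at hvol

lemma cdf_gaussianReal_eq_integral (μ : ℝ) {v : ℝ≥0} (hv : v ≠ 0) (x : ℝ) :
    cdf (gaussianReal μ v) x = ∫ t in Iic x, gaussianPDFReal μ v t := by
  rw [cdf_eq_real, measureReal_def, gaussianReal_apply_eq_integral μ hv,
    ENNReal.toReal_ofReal
      (setIntegral_nonneg measurableSet_Iic fun t _ => gaussianPDFReal_nonneg μ v t)]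

lemma cdf_gaussianReal_add_const (μ : ℝ) (v : ℝ≥0) (c x : ℝ) :
    cdf (gaussianReal (μ + c) v) x = cdf (gaussianReal μ v) (x - c) := by
  rw [cdf_eq_real, cdf_eq_real, ← gaussianReal_map_add_const,
    map_measureReal_apply (measurable_add_const c) measurableSet_Iic]
  congr 1
  ext t
  simp [le_sub_iff_add_le]

lemma gaussianPDFReal_add_mean (μ c : ℝ) {v : ℝ≥0} (t : ℝ) :
    gaussianPDFReal (μ + c) v t
      = exp ((c * (t - μ) - c ^ 2 / 2) / v) * gaussianPDFReal μ v t := by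
  simp only [gaussianPDFReal]
  rw [mul_left_comm, ← Real.exp_add]
  congr 2
  field_simp
  ring

lemma cdf_gaussianReal_le_exp_mul (c x : ℝ) (hc : 0 ≤ c) :
    cdf (gaussianReal c 1) x ≤ exp (c * x - c ^ 2 / 2) * cdf (gaussianReal 0 1) x := by
  rw [cdf_gaussianReal_eq_integral _ one_ne_zero, cdf_gaussianReal_eq_integral _ one_ne_zero,
    ← integral_const_mul]
  refine setIntegral_mono_on (integrable_gaussianPDFReal _ _).integrableOn
    ((integrable_gaussianPDFReal _ _).const_mul _).integrableOn measurableSet_Iic fun t ht => ?_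
  rw [← zero_add c, gaussianPDFReal_add_mean]
  refine mul_le_mul_of_nonneg_right (exp_le_exp.mpr ?_) (gaussianPDFReal_nonneg 0 1 t)
  simpa using mul_le_mul_of_nonneg_left (mem_Iic.mp ht) hc

lemma tendsto_stdNormalCDF_sub_div_atBot {c : ℝ} (hc : 0 < c) :
    Tendsto (fun x => stdNormalCDF (x - c) / stdNormalCDF x) atBot (𝓝 0) := by
  have hpos (x : ℝ) : 0 < stdNormalCDF x := cdf_gaussianReal_pos 0 one_ne_zero x
  have hbound : Tendsto (fun x => exp (c * x - c ^ 2 / 2)) atBot (𝓝 0) :=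
    tendsto_exp_atBot.comp (tendsto_atBot_add_const_right _ _ (tendsto_id.const_mul_atBot hc))
  refine tendsto_of_tendsto_of_tendsto_of_le_of_le tendsto_const_nhds hbound
    (fun x => div_nonneg (hpos _).le (hpos x).le) fun x => ?_
  rw [div_le_iff₀ (hpos x), stdNormalCDF, ← cdf_gaussianReal_add_const, zero_add]
  exact cdf_gaussianReal_le_exp_mul c x hc.le

theorem digital_price_up_shifted_spot_limit_general
    (r σ τ S lam₁ h : ℝ) (hσ : 0 < σ) (hτ : 0 < τ) (hS : 0 < S)
    (hlam : 0 < lam₁)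
    (ν : ℝ)
    (d : ℝ → ℝ → ℝ) (hd : ∀ k S', d k S' = (k - Real.log S' - ν*τ) / (σ * Real.sqrt τ))
    (l : ℝ → ℝ) (hl : ∀ k, l k = h - (h + Real.exp (r*τ)) / stdNormalCDF (d k S)) :
    Filter.Tendsto
      (fun k : ℝ => Real.exp (-(r*τ)) *
        (l k * stdNormalCDF (d k (S * Real.exp (lam₁*τ)))
          + h * (1 - stdNormalCDF (d k (S * Real.exp (lam₁*τ))))))
      Filter.atBot (nhds (Real.exp (-(r*τ)) * h)) := by
  have hστ : 0 < σ * √τ := by positivity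
  set c := lam₁ * τ / (σ * √τ)
  have hshift (k : ℝ) : d k (S * exp (lam₁ * τ)) = d k S - c := by
    rw [hd, hd, log_mul hS.ne' (exp_ne_zero _), log_exp]
    ring
  have hd_atBot : Tendsto (fun k => d k S) atBot atBot := by
    simp_rw [hd]
    exact (tendsto_atBot_add_const_right _ _
      (tendsto_atBot_add_const_right _ _ tendsto_id)).atBot_div_const hστ
  have hprice (k : ℝ) : exp (-(r * τ)) *
      (l k * stdNormalCDF (d k (S * exp (lam₁ * τ)))
        + h * (1 - stdNormalCDF (d k (S * exp (lam₁ * τ)))))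
      = exp (-(r * τ)) * h - exp (-(r * τ)) * (h + exp (r * τ))
        * (stdNormalCDF (d k S - c) / stdNormalCDF (d k S)) := by
    rw [hl, hshift]
    ring
  simp_rw [hprice]
  simpa using tendsto_const_nhds.sub
    (((tendsto_stdNormalCDF_sub_div_atBot (by positivity)).comp hd_atBot).const_mul _)

/-- As the strike `k → -∞`, the Black–Scholes price, at the up-shifted spot
`S·e^{λ₁τ}`, of the budget-constrained digital option paying `h` above `e^k` and
`ℓ(k)` below, tends to `e^{-rτ}·h`. -/
theorem digital_price_up_shifted_spot_limit
    (r σ τ S lam₁ h : ℝ) (hσ : 0 < σ) (hτ : 0 < τ) (hS : 0 < S)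
    (hlam : 0 < lam₁) (hh : 0 < h)
    (ν : ℝ) (hν : ν = r - σ^2/2)
    (d : ℝ → ℝ → ℝ) (hd : ∀ k S', d k S' = (k - Real.log S' - ν*τ) / (σ * Real.sqrt τ))
    (l : ℝ → ℝ) (hl : ∀ k, l k = h - (h + Real.exp (r*τ)) / stdNormalCDF (d k S)) :
    Filter.Tendsto
      (fun k : ℝ => Real.exp (-(r*τ)) *
        (l k * stdNormalCDF (d k (S * Real.exp (lam₁*τ)))
          + h * (1 - stdNormalCDF (d k (S * Real.exp (lam₁*τ))))))
      Filter.atBot (nhds (Real.exp (-(r*τ)) * h)) :=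
  digital_price_up_shifted_spot_limit_general r σ τ S lam₁ h hσ hτ hS hlam ν d hd l hl
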